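/- arXiv:1711.03747 — 4 statements merged into one kernel-verified Lean document; each statement's English description precedes it below -/
import Mathlib

section
/- For all integers ζ, q, m with 1 ≤ ζ ≤ q ≤ m and every ε ∈ [0,1], Φ(q − ζ; m, 1 − ε) ≥ Ψ(q, ζ; m, ε). -/
/-- The binomial distribution function `Φ(j; N, p) = Σ_{i=0}^{j} C(N,i) pⁱ (1−p)^{N−i}`. -/
noncomputable def binomCdf (j N : ℕ) (p : ℝ) : ℝ :=
  ∑ i ∈ Finset.range (j + 1), (N.choose i : ℝ) * p ^ i * (1 - p) ^ (N - i)

/-- The Calafiore / Campi–Garatti confidence-bound function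
`Ψ(q, ζ; m, ε) = 1 − C(m−q+ζ−1, m−q) · Φ(m−q+ζ−1; m, ε)` for sample-discarding
scenario programs. -/
noncomputable def psiCG (q ζ m : ℕ) (ε : ℝ) : ℝ :=
  1 - ((m - q + ζ - 1).choose (m - q) : ℝ) * binomCdf (m - q + ζ - 1) m ε

lemma binomCdf_nonneg (j N : ℕ) (p : ℝ) (h0 : 0 ≤ p) (h1 : p ≤ 1) :
    0 ≤ binomCdf j N p := by
  apply Finset.sum_nonneg
  intro i _
  have : (0:ℝ) ≤ 1 - p := by linarith
  positivity

lemma binomCdf_full (m : ℕ) (p : ℝ) :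
    ∑ i ∈ Finset.range (m + 1), (m.choose i : ℝ) * p ^ i * (1 - p) ^ (m - i) = 1 := by
  have h := add_pow p (1 - p) m
  simp only [add_sub_cancel, one_pow] at h
  calc ∑ i ∈ Finset.range (m + 1), (m.choose i : ℝ) * p ^ i * (1 - p) ^ (m - i)
      = ∑ i ∈ Finset.range (m + 1), p ^ i * (1 - p) ^ (m - i) * (m.choose i : ℝ) :=
        Finset.sum_congr rfl fun i _ => by ring
    _ = 1 := h.symm

lemma binomCdf_symm (j m : ℕ) (hj : j < m) (p : ℝ) :
    binomCdf j m p + binomCdf (m - j - 1) m (1 - p) = 1 := by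
  have key : binomCdf (m - j - 1) m (1 - p)
      = ∑ i ∈ Finset.Ico (j + 1) (m + 1), (m.choose i : ℝ) * p ^ i * (1 - p) ^ (m - i) := by
    unfold binomCdf
    rw [sub_sub_cancel]
    have hr : m - j - 1 + 1 = m - j := by omega
    rw [hr]
    refine Finset.sum_nbij' (fun k => m - k) (fun i => m - i) ?_ ?_ ?_ ?_ ?_
    · intro k hk; simp only [Finset.mem_range] at hk; simp only [Finset.mem_Ico]; omega
    · intro i hi; simp only [Finset.mem_Ico] at hi; simp only [Finset.mem_range]; omega
    · intro k hk; simp only [Finset.mem_range] at hk; omega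
    · intro i hi; simp only [Finset.mem_Ico] at hi; omega
    · intro k hk
      simp only [Finset.mem_range] at hk
      have h1 : m - (m - k) = k := by omega
      have h2 : m.choose (m - k) = m.choose k := Nat.choose_symm (by omega)
      rw [h1, h2]
      ring
  rw [key]
  unfold binomCdf
  rw [Finset.range_eq_Ico, Finset.sum_Ico_consecutive _ (by omega : 0 ≤ j+1) (by omega : j+1 ≤ m+1),
    ← Finset.range_eq_Ico]
  exact binomCdf_full m p

/-- For all integers `1 ≤ ζ ≤ q ≤ m` and every `ε ∈ [0,1]`,
`Φ(q − ζ; m, 1 − ε) ≥ Ψ(q, ζ; m, ε)`. -/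
theorem binomCdf_ge_psiCG (ζ q m : ℕ) (h1 : 1 ≤ ζ) (h2 : ζ ≤ q) (h3 : q ≤ m)
    (ε : ℝ) (hε : ε ∈ Set.Icc (0 : ℝ) 1) :
    psiCG q ζ m ε ≤ binomCdf (q - ζ) m (1 - ε) := by
  obtain ⟨hε0, hε1⟩ := hε
  have hj : q - ζ < m := by omega
  have hsym := binomCdf_symm (q - ζ) m hj (1 - ε)
  have hK : m - (q - ζ) - 1 = m - q + ζ - 1 := by omega
  rw [hK, sub_sub_cancel] at hsym
  have hΦ : 0 ≤ binomCdf (m - q + ζ - 1) m ε := binomCdf_nonneg _ _ _ hε0 hε1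
  have hC : (1 : ℝ) ≤ ((m - q + ζ - 1).choose (m - q) : ℝ) := by
    exact_mod_cast (Nat.choose_pos (by omega : m - q ≤ m - q + ζ - 1))
  have : binomCdf (m - q + ζ - 1) m ε
      ≤ ((m - q + ζ - 1).choose (m - q) : ℝ) * binomCdf (m - q + ζ - 1) m ε :=
    le_mul_of_one_le_left hΦ hC
  unfold psiCG
  linarith
end

section
/- For all integers ζ, q, m with 2 ≤ ζ ≤ q < m and every ε ∈ [0,1), the inequality is strict: Φ(q − ζ; m, 1 − ε) > Ψ(q, ζ; m, ε). In other words, equality of the two bounds can hold (for all ε) only if ζ = 1 or q = m. -/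
lemma binomCdf_total (N : ℕ) (p : ℝ) :
    ∑ i ∈ Finset.range (N + 1), (N.choose i : ℝ) * p ^ i * (1 - p) ^ (N - i) = 1 := by
  have h := add_pow p (1 - p) N
  simp only [add_sub_cancel, one_pow] at h
  have h' : ∑ i ∈ Finset.range (N + 1), (N.choose i : ℝ) * p ^ i * (1 - p) ^ (N - i)
      = ∑ m ∈ Finset.range (N + 1), p ^ m * (1 - p) ^ (N - m) * ↑(N.choose m) :=
    Finset.sum_congr rfl fun i _ => by ring
  rw [h']; exact h.symm

lemma binomCdf_reflect (j N : ℕ) (hj : j < N) (p : ℝ) :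
    binomCdf j N p = 1 - binomCdf (N - j - 1) N (1 - p) := by
  have key : binomCdf j N p + binomCdf (N - j - 1) N (1 - p) = 1 := by
    unfold binomCdf
    have hsplit : Finset.range (N + 1) = Finset.range (j + 1) ∪ Finset.Ico (j + 1) (N + 1) := by
      simp only [Finset.range_eq_Ico]
      exact (Finset.Ico_union_Ico_eq_Ico (Nat.zero_le _) (by omega)).symm
    have hdisj : Disjoint (Finset.range (j + 1)) (Finset.Ico (j + 1) (N + 1)) := by
      rw [Finset.disjoint_left]
      intro a ha hb
      simp only [Finset.mem_range, Finset.mem_Ico] at ha hb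
      omega
    have htot := binomCdf_total N p
    rw [hsplit, Finset.sum_union hdisj] at htot
    have hrefl : ∑ i ∈ Finset.Ico (j + 1) (N + 1), (N.choose i : ℝ) * p ^ i * (1 - p) ^ (N - i)
        = ∑ i ∈ Finset.range (N - j - 1 + 1),
            (N.choose i : ℝ) * (1 - p) ^ i * (1 - (1 - p)) ^ (N - i) := by
      rw [Finset.range_eq_Ico]
      refine Finset.sum_nbij' (fun i => N - i) (fun i => N - i) ?_ ?_ ?_ ?_ ?_
      · intro i hi; simp only [Finset.mem_Ico] at *; omega
      · intro i hi; simp only [Finset.mem_Ico] at *; omega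
      · intro i hi; simp only [Finset.mem_Ico] at hi; omega
      · intro i hi; simp only [Finset.mem_Ico] at hi; omega
      · intro i hi
        simp only [Finset.mem_Ico] at hi
        rw [Nat.choose_symm (by omega), sub_sub_cancel]
        have h2 : N - (N - i) = i := by omega
        rw [h2]; ring
    rw [hrefl] at htot
    linarith
  linarith

lemma one_lt_choose {n r : ℕ} (h0 : 0 < r) (h1 : r < n) : 1 < n.choose r := by
  obtain ⟨s, rfl⟩ := Nat.exists_eq_succ_of_ne_zero (show r ≠ 0 by omega)
  obtain ⟨t, rfl⟩ := Nat.exists_eq_succ_of_ne_zero (show n ≠ 0 by omega)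
  rw [Nat.choose_succ_succ]
  have ha : 0 < t.choose s := Nat.choose_pos (by omega)
  have hb : 0 < t.choose (s + 1) := Nat.choose_pos (by omega)
  simp only [Nat.succ_eq_add_one] at *
  omega


/-- For all integers `2 ≤ ζ ≤ q < m` and every `ε ∈ [0,1)`, the inequality between the
two confidence bounds is strict: `Φ(q − ζ; m, 1 − ε) > Ψ(q, ζ; m, ε)`; equality of the
bounds can hold (for all `ε`) only if `ζ = 1` or `q = m`. -/
theorem binomCdf_gt_psiCG (ζ q m : ℕ) (h1 : 2 ≤ ζ) (h2 : ζ ≤ q) (h3 : q < m)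
    (ε : ℝ) (hε : ε ∈ Set.Ico (0 : ℝ) 1) :
    psiCG q ζ m ε < binomCdf (q - ζ) m (1 - ε) := by
  obtain ⟨hε0, hε1⟩ := hε
  set k := m - q + ζ - 1 with hk
  have hrw : binomCdf (q - ζ) m (1 - ε) = 1 - binomCdf k m ε := by
    rw [binomCdf_reflect (q - ζ) m (by omega) (1 - ε)]
    have ha : m - (q - ζ) - 1 = k := by omega
    have hb : (1 : ℝ) - (1 - ε) = ε := by ring
    rw [ha, hb]
  rw [hrw]
  unfold psiCG
  have hΦpos : 0 < binomCdf k m ε := by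
    unfold binomCdf
    apply Finset.sum_pos'
    · intro i _
      exact mul_nonneg (mul_nonneg (Nat.cast_nonneg _) (pow_nonneg hε0 _))
        (pow_nonneg (by linarith) _)
    · refine ⟨0, Finset.mem_range.mpr (by omega), ?_⟩
      simp only [Nat.choose_zero_right, Nat.cast_one, pow_zero, one_mul, mul_one, Nat.sub_zero]
      exact pow_pos (by linarith) m
  have hC : (1 : ℝ) < ((k).choose (m - q) : ℝ) := by
    have := one_lt_choose (show 0 < m - q by omega) (show m - q < k by omega)
    exact_mod_cast this
  nlinarith
end

section
/- Let k ≥ 1 be an integer and let μ be a Borel probability measure on the interval [0,1] such that ∫₀¹ (1−v)^{q−k} dμ(v) = 1/C(q, k) for every integer q ≥ k. Then μ is uniquely determined and its distribution function is F(v) = v^k; that is, μ([0, v]) = v^k for every v ∈ [0,1] (equivalently, μ has density k v^{k−1} with respect to Lebesgue measure). -/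
/-!
The power-function law `ν` (density `k v^(k-1)` on `[0,1]`) has distribution function `v^k`,
and by the Beta integral `∫₀¹ k v^(k-1) (1-v)^n dv = k (k-1)! n! / (n+k)! = 1/C(n+k,k)` it has
the prescribed moments of `1 - v`. Polynomials in `1 - v` are all polynomials, so `μ` and `ν` integrate every
polynomial alike; since both live on `[0,1]`, Weierstrass approximation extends this to every
bounded continuous function, and a finite Borel measure on `ℝ` is determined by those integrals.
-/

open MeasureTheory Set Polynomial Filter Topology
open scoped Nat

theorem integral_pow_mul_one_sub_pow (m n : ℕ) :
    ∫ x in (0 : ℝ)..1, x ^ m * (1 - x) ^ n = m ! * n ! / (m + n + 1)! := by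
  apply Complex.ofReal_injective
  have hbeta := Complex.betaIntegral_eq_Gamma_mul_div (m + 1) (n + 1)
    (by simp; positivity) (by simp; positivity)
  rw [show (m + 1 : ℂ) + (n + 1) = ↑(m + n + 1 : ℕ) + 1 by push_cast; ring,
    Complex.Gamma_nat_eq_factorial, Complex.Gamma_nat_eq_factorial,
    Complex.Gamma_nat_eq_factorial, Complex.betaIntegral] at hbeta
  push_cast
  rw [← hbeta, ← intervalIntegral.integral_ofReal]
  refine intervalIntegral.integral_congr fun x _ => ?_
  simp [← Complex.cpow_natCast]

section ConcentratedOnIcc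

variable {μ ν : Measure ℝ} [IsFiniteMeasure μ] [IsFiniteMeasure ν] {a b : ℝ}

lemma Continuous.integrable_of_ae_mem_Icc {f : ℝ → ℝ} (hf : Continuous f)
    (hμ : ∀ᵐ x ∂μ, x ∈ Icc a b) : Integrable f μ := by
  rw [← Measure.restrict_eq_self_of_ae_mem hμ]
  exact hf.integrableOn_Icc

lemma abs_integral_sub_integral_le_of_ae_mem_Icc (hμ : ∀ᵐ x ∂μ, x ∈ Icc a b) {f g : ℝ → ℝ}
    (hf : Continuous f) (hg : Continuous g) {ε : ℝ} (hfg : ∀ x ∈ Icc a b, |f x - g x| ≤ ε) :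
    |∫ x, f x ∂μ - ∫ x, g x ∂μ| ≤ ε * μ.real univ := by
  rw [← integral_sub (hf.integrable_of_ae_mem_Icc hμ) (hg.integrable_of_ae_mem_Icc hμ)]
  exact norm_integral_le_of_norm_le_const
    (hμ.mono fun x hx => (Real.norm_eq_abs _).trans_le (hfg x hx))

lemma integral_eq_of_forall_integral_eval_eq (hμ : ∀ᵐ x ∂μ, x ∈ Icc a b)
    (hν : ∀ᵐ x ∂ν, x ∈ Icc a b) (hpoly : ∀ p : ℝ[X], ∫ x, p.eval x ∂μ = ∫ x, p.eval x ∂ν)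
    {f : ℝ → ℝ} (hf : Continuous f) : ∫ x, f x ∂μ = ∫ x, f x ∂ν := by
  have hclose : ∀ ε > 0, |∫ x, f x ∂μ - ∫ x, f x ∂ν| ≤ ε * (μ.real univ + ν.real univ) := by
    intro ε hε
    obtain ⟨p, hp⟩ := exists_polynomial_near_of_continuousOn a b f hf.continuousOn ε hε
    have hfp : ∀ x ∈ Icc a b, |f x - p.eval x| ≤ ε := fun x hx =>
      (abs_sub_comm (p.eval x) (f x) ▸ hp x hx).le
    calc |∫ x, f x ∂μ - ∫ x, f x ∂ν|
        = |(∫ x, f x ∂μ - ∫ x, p.eval x ∂μ) - (∫ x, f x ∂ν - ∫ x, p.eval x ∂ν)| := by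
          rw [hpoly p, sub_sub_sub_cancel_right]
      _ ≤ |∫ x, f x ∂μ - ∫ x, p.eval x ∂μ| + |∫ x, f x ∂ν - ∫ x, p.eval x ∂ν| := abs_sub _ _
      _ ≤ ε * μ.real univ + ε * ν.real univ :=
          add_le_add (abs_integral_sub_integral_le_of_ae_mem_Icc hμ hf p.continuous hfp)
            (abs_integral_sub_integral_le_of_ae_mem_Icc hν hf p.continuous hfp)
      _ = ε * (μ.real univ + ν.real univ) := (mul_add _ _ _).symm
  have hlim : Tendsto (fun ε : ℝ => ε * (μ.real univ + ν.real univ)) (𝓝[>] 0) (𝓝 0) := by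
    simpa using ((continuous_mul_const _).tendsto' 0 _ (zero_mul _)).mono_left nhdsWithin_le_nhds
  exact sub_eq_zero.1 <| abs_nonpos_iff.1 <| ge_of_tendsto hlim <|
    eventually_nhdsWithin_of_forall hclose

theorem Measure.ext_of_forall_integral_eval_eq (hμ : ∀ᵐ x ∂μ, x ∈ Icc a b)
    (hν : ∀ᵐ x ∂ν, x ∈ Icc a b) (hpoly : ∀ p : ℝ[X], ∫ x, p.eval x ∂μ = ∫ x, p.eval x ∂ν) :
    μ = ν :=
  ext_of_forall_integral_eq_of_IsFiniteMeasure fun f =>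
    integral_eq_of_forall_integral_eval_eq hμ hν hpoly f.continuous

lemma integral_eval_eq_of_forall_integral_one_sub_pow_eq (hμ : ∀ᵐ x ∂μ, x ∈ Icc a b)
    (hν : ∀ᵐ x ∂ν, x ∈ Icc a b) (hmom : ∀ n : ℕ, ∫ x, (1 - x) ^ n ∂μ = ∫ x, (1 - x) ^ n ∂ν)
    (p : ℝ[X]) : ∫ x, p.eval x ∂μ = ∫ x, p.eval x ∂ν := by
  set q := p.comp (1 - X)
  have hpq : ∀ x, p.eval x = ∑ i ∈ Finset.range (q.natDegree + 1), q.coeff i * (1 - x) ^ i :=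
    fun x => by rw [← eval_eq_sum_range, eval_comp]; simp
  have hint {ρ : Measure ℝ} [IsFiniteMeasure ρ] (hρ : ∀ᵐ x ∂ρ, x ∈ Icc a b) (i : ℕ) :
      Integrable (fun x => q.coeff i * (1 - x) ^ i) ρ :=
    (by fun_prop : Continuous fun x : ℝ => q.coeff i * (1 - x) ^ i).integrable_of_ae_mem_Icc hρ
  simp only [hpq]
  rw [integral_finsetSum _ fun i _ => hint hμ i, integral_finsetSum _ fun i _ => hint hν i]
  simp only [integral_const_mul, hmom]

end ConcentratedOnIcc

noncomputable def powerFunctionMeasure (k : ℕ) : Measure ℝ :=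
  (volume.restrict (Icc 0 1)).withDensity fun v => ENNReal.ofReal (k * v ^ (k - 1))

lemma ae_mem_Icc_powerFunctionMeasure (k : ℕ) : ∀ᵐ x ∂powerFunctionMeasure k, x ∈ Icc 0 1 :=
  (withDensity_absolutelyContinuous _ _).ae_le (ae_restrict_mem measurableSet_Icc)

section PowerFunctionMeasure

variable {k : ℕ}

lemma powerFunctionMeasure_Icc (hk : 1 ≤ k) {v : ℝ} (hv : v ∈ Icc 0 1) :
    powerFunctionMeasure k (Icc 0 v) = ENNReal.ofReal (v ^ k) := by
  obtain ⟨j, rfl⟩ := Nat.exists_eq_add_of_le' hk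
  have hint : IntegrableOn (fun x : ℝ => ((j + 1 : ℕ) : ℝ) * x ^ j) (Icc 0 v) :=
    (by fun_prop : Continuous fun x : ℝ => ((j + 1 : ℕ) : ℝ) * x ^ j).integrableOn_Icc
  have hpos : ∀ᵐ x ∂volume.restrict (Icc 0 v), 0 ≤ ((j + 1 : ℕ) : ℝ) * x ^ j :=
    ae_restrict_of_forall_mem measurableSet_Icc fun x hx => by have := hx.1; positivity
  rw [powerFunctionMeasure, withDensity_apply _ measurableSet_Icc,
    Measure.restrict_restrict measurableSet_Icc, inter_eq_left.2 (Icc_subset_Icc le_rfl hv.2),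
    Nat.add_sub_cancel, ← ofReal_integral_eq_lintegral_ofReal hint hpos,
    integral_Icc_eq_integral_Ioc, ← intervalIntegral.integral_of_le hv.1,
    intervalIntegral.integral_const_mul, integral_pow]
  push_cast
  rw [zero_pow j.succ_ne_zero, sub_zero, mul_div_cancel₀ _ (by positivity)]

lemma isProbabilityMeasure_powerFunctionMeasure (hk : 1 ≤ k) :
    IsProbabilityMeasure (powerFunctionMeasure k) := by
  have hcompl : powerFunctionMeasure k (Icc 0 1)ᶜ = 0 :=
    mem_ae_iff.1 (ae_mem_Icc_powerFunctionMeasure k)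
  constructor
  rw [← measure_add_measure_compl measurableSet_Icc (s := Icc (0 : ℝ) 1),
    powerFunctionMeasure_Icc hk ⟨zero_le_one, le_rfl⟩, one_pow, ENNReal.ofReal_one,
    hcompl, add_zero]

lemma integral_one_sub_pow_powerFunctionMeasure (hk : 1 ≤ k) (n : ℕ) :
    ∫ x, (1 - x) ^ n ∂powerFunctionMeasure k = 1 / (n + k).choose k := by
  obtain ⟨j, rfl⟩ := Nat.exists_eq_add_of_le' hk
  have hdensity : ∀ x ∈ Icc (0 : ℝ) 1,
      (ENNReal.ofReal (((j + 1 : ℕ) : ℝ) * x ^ (j + 1 - 1))).toReal • (1 - x) ^ n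
        = ((j + 1 : ℕ) : ℝ) * (x ^ j * (1 - x) ^ n) := fun x hx => by
    have := hx.1
    rw [Nat.add_sub_cancel, ENNReal.toReal_ofReal (by positivity), smul_eq_mul, mul_assoc]
  rw [powerFunctionMeasure, integral_withDensity_eq_integral_toReal_smul (by fun_prop)
      (ae_of_all _ fun _ => ENNReal.ofReal_lt_top),
    setIntegral_congr_fun measurableSet_Icc hdensity, integral_Icc_eq_integral_Ioc,
    ← intervalIntegral.integral_of_le zero_le_one, intervalIntegral.integral_const_mul,
    integral_pow_mul_one_sub_pow, Nat.cast_choose ℝ (Nat.le_add_left _ n), Nat.add_sub_cancel,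
    show n + (j + 1) = j + n + 1 by ring, Nat.factorial_succ j]
  push_cast
  field_simp

end PowerFunctionMeasure

/-- Hausdorff moment problem instance (Lemma 1): if `μ` is a Borel probability measure
supported on `[0,1]` such that `∫ (1−v)^{q−k} dμ(v) = 1/C(q,k)` for every integer
`q ≥ k` (where `k ≥ 1`), then `μ` is uniquely determined, with distribution function
`F(v) = v^k`: `μ([0,v]) = v^k` for every `v ∈ [0,1]`. -/
theorem hausdorff_moment_unique (k : ℕ) (hk : 1 ≤ k)
    (μ : Measure ℝ) [IsProbabilityMeasure μ]
    (hsupp : μ (Set.Icc (0 : ℝ) 1)ᶜ = 0)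
    (hmom : ∀ q : ℕ, k ≤ q → ∫ v, (1 - v) ^ (q - k) ∂μ = 1 / (q.choose k : ℝ)) :
    ∀ v ∈ Set.Icc (0 : ℝ) 1, μ (Set.Icc 0 v) = ENNReal.ofReal (v ^ k) := by
  have := isProbabilityMeasure_powerFunctionMeasure hk
  have hμ : ∀ᵐ x ∂μ, x ∈ Icc (0 : ℝ) 1 := mem_ae_iff.2 hsupp
  have hmom' (n : ℕ) : ∫ x, (1 - x) ^ n ∂μ = ∫ x, (1 - x) ^ n ∂powerFunctionMeasure k := by
    rw [integral_one_sub_pow_powerFunctionMeasure hk, ← hmom (n + k) (Nat.le_add_left k n),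
      Nat.add_sub_cancel]
  have hμν : μ = powerFunctionMeasure k :=
    Measure.ext_of_forall_integral_eval_eq hμ (ae_mem_Icc_powerFunctionMeasure k)
      (integral_eval_eq_of_forall_integral_one_sub_pow_eq hμ
        (ae_mem_Icc_powerFunctionMeasure k) hmom')
  intro v hv
  rw [hμν, powerFunctionMeasure_Icc hk hv]
end

section
/- Let 𝒳 ⊂ ℝⁿ be compact and convex, c ∈ ℝⁿ, I a finite index set, and for each i ∈ I let g_i : ℝⁿ → ℝ be convex and lower-semicontinuous. Suppose that for every subset S ⊆ I the minimizer x*(S) of cᵀx over {x ∈ 𝒳 : g_i(x) ≤ 0 for all i ∈ S} exists and is unique. Then the number of support constraints, i.e. the number of indices i ∈ I with x*(I∖{i}) ≠ x*(I), is at most n. (Consequently the maximum support dimension ζmax of the sampled convex program never exceeds the dimension n of the decision variable.) -/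
/-- The linear objective `cᵀx`. -/
def objective {n : ℕ} (c x : Fin n → ℝ) : ℝ := ∑ i, c i * x i

/-!
Suppose more than `n` constraints are support constraints. For each such `i` the relaxed optimum
`x*(I∖{i})` has objective strictly below `cᵀx*(I)`; moving it towards `x*(I)` along the segment
joining them, we reach the common level `α = maxᵢ cᵀx*(I∖{i}) < cᵀx*(I)` at a point `zᵢ ∈ X`
which, by convexity, still satisfies every constraint except possibly the `i`-th. These more than
`n` points lie in the hyperplane `cᵀx = α`, so they are affinely dependent, and Radon's theorem
splits them into two parts whose convex hulls meet at some `p`. Each constraint holds on all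
points of one of the two parts, hence at `p`: so `p` is feasible for the full program with
`cᵀp = α < cᵀx*(I)`, a contradiction.
-/

open Module

section

variable {V : Type*} [AddCommGroup V] [Module ℝ V]

theorem LinearMap.exists_mem_segment_apply_eq (φ : V →ₗ[ℝ] ℝ) {a b : V} {α : ℝ}
    (hb : φ b ≤ α) (ha : α ≤ φ a) : ∃ z ∈ segment ℝ a b, φ z = α := by
  have : α ∈ φ.toAffineMap '' segment ℝ a b := by
    rw [image_segment, segment_eq_uIcc]
    exact Set.mem_uIcc.2 (Or.inr ⟨hb, ha⟩)
  simpa using this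

theorem not_affineIndependent_of_apply_eq [FiniteDimensional ℝ V] {κ : Type*} [Fintype κ]
    {φ : V →ₗ[ℝ] ℝ} (hφ : φ ≠ 0) {z : κ → V} {α : ℝ} (hz : ∀ k, φ (z k) = α)
    (hcard : finrank ℝ V < Fintype.card κ) : ¬ AffineIndependent ℝ z := by
  intro hind
  have hspan : vectorSpan ℝ (Set.range z) ≤ LinearMap.ker φ := by
    rw [vectorSpan_def, Submodule.span_le]
    rintro _ ⟨_, ⟨k, rfl⟩, _, ⟨l, rfl⟩, rfl⟩
    simp [hz]
  have hker : finrank ℝ (LinearMap.ker φ) < finrank ℝ V :=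
    Submodule.finrank_lt (fun h => hφ (LinearMap.ker_eq_top.1 h))
  have := Submodule.finrank_mono hspan
  have := hind.card_le_finrank_succ
  omega

theorem exists_mem_iInter_of_not_affineIndependent {ι κ : Type*} {K : Set V} (hK : Convex ℝ K)
    {C : ι → Set V} (hC : ∀ i, Convex ℝ (C i)) {z : κ → V} (hz : ¬ AffineIndependent ℝ z)
    {f : κ → ι} (hf : Function.Injective f) (hzK : ∀ k, z k ∈ K)
    (hzC : ∀ k i, i ≠ f k → z k ∈ C i) : ∃ p ∈ K, ∀ i, p ∈ C i := by
  obtain ⟨I, p, hpI, hpIc⟩ := Convex.radon_partition hz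
  have hull_subset : ∀ (U : Set κ) (L : Set V), Convex ℝ L → (∀ k ∈ U, z k ∈ L) →
      convexHull ℝ (z '' U) ⊆ L := fun U L hL hUL =>
    convexHull_min (Set.image_subset_iff.2 hUL) hL
  refine ⟨p, hull_subset I K hK (fun k _ => hzK k) hpI, fun i => ?_⟩
  by_cases hi : ∃ k ∈ I, f k = i
  · obtain ⟨k, hk, rfl⟩ := hi
    refine hull_subset Iᶜ _ (hC _) (fun l hl => hzC l _ ?_) hpIc
    exact fun h => hl (hf h ▸ hk)
  · push Not at hi
    exact hull_subset I _ (hC i) (fun l hl => hzC l i (hi l hl).symm) hpI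

theorem card_le_finrank_of_relaxed_apply_lt [FiniteDimensional ℝ V] {ι : Type*} {φ : V →ₗ[ℝ] ℝ}
    {K : Set V} (hK : Convex ℝ K) {C : ι → Set V} (hC : ∀ i, Convex ℝ (C i))
    {x₀ : V} (hx₀K : x₀ ∈ K) (hx₀C : ∀ i, x₀ ∈ C i)
    (hmin : ∀ y ∈ K, (∀ i, y ∈ C i) → φ x₀ ≤ φ y)
    {T : Finset ι} {x : ι → V} (hxK : ∀ i ∈ T, x i ∈ K) (hxC : ∀ i ∈ T, ∀ j ≠ i, x i ∈ C j)
    (hlt : ∀ i ∈ T, φ (x i) < φ x₀) : T.card ≤ finrank ℝ V := by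
  by_contra! hcard
  have hT : T.Nonempty := Finset.card_pos.1 (by omega)
  set α := T.sup' hT (fun i => φ (x i))
  have hα : α < φ x₀ := (Finset.sup'_lt_iff hT).2 hlt
  have hz : ∀ i : T, ∃ z ∈ segment ℝ x₀ (x i), φ z = α := fun i =>
    φ.exists_mem_segment_apply_eq (Finset.le_sup' (fun i => φ (x i)) i.2) hα.le
  choose z hzseg hzα using hz
  have hφ : φ ≠ 0 := by
    rintro rfl
    obtain ⟨i, hi⟩ := hT
    simpa using hlt i hi
  have hdep : ¬ AffineIndependent ℝ z :=
    not_affineIndependent_of_apply_eq hφ hzα (by simpa using hcard)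
  -- the level set `{φ = α}` is added to `K`, so that the common point also lies on it
  obtain ⟨p, ⟨hpK, hpα⟩, hpC⟩ := exists_mem_iInter_of_not_affineIndependent
    (K := K ∩ {y | φ y = α}) (hK.inter (convex_hyperplane φ.isLinear α)) hC hdep
    Subtype.val_injective
    (fun i => ⟨hK.segment_subset hx₀K (hxK i i.2) (hzseg i), hzα i⟩)
    (fun i j hj => (hC j).segment_subset (hx₀C j) (hxC i i.2 j hj) (hzseg i))
  linarith [hmin p hpK hpC, show φ p = α from hpα]

end

open Classical in
theorem support_constraints_card_le_general {n : ℕ} {ι : Type*} [Fintype ι] [DecidableEq ι]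
    (X : Set (Fin n → ℝ)) (hXv : Convex ℝ X)
    (c : Fin n → ℝ) (g : ι → (Fin n → ℝ) → ℝ)
    (hgc : ∀ i : ι, ConvexOn ℝ Set.univ (g i))
    (xstar : Finset ι → (Fin n → ℝ))
    -- `xstar s` is the unique minimizer of `cᵀx` over `{x ∈ X : g i x ≤ 0 ∀ i ∈ s}`
    (hopt : ∀ s : Finset ι,
      xstar s ∈ X ∧ (∀ i ∈ s, g i (xstar s) ≤ 0) ∧
      ∀ y ∈ X, (∀ i ∈ s, g i y ≤ 0) →
        objective c (xstar s) ≤ objective c y ∧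
        (objective c y = objective c (xstar s) → y = xstar s)) :
    (Finset.univ.filter
        fun i : ι => xstar (Finset.univ.erase i) ≠ xstar Finset.univ).card ≤ n := by
  obtain ⟨hxX, hxg, hxmin⟩ := hopt Finset.univ
  have hsupport_lt : ∀ i, xstar (Finset.univ.erase i) ≠ xstar Finset.univ →
      objective c (xstar (Finset.univ.erase i)) < objective c (xstar Finset.univ) := by
    intro i hi
    obtain ⟨hle, huniq⟩ := (hopt _).2.2 _ hxX fun j _ => hxg j (Finset.mem_univ j)
    exact hle.lt_of_ne fun h => hi (huniq h.symm).symm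
  calc _ ≤ finrank ℝ (Fin n → ℝ) :=
        card_le_finrank_of_relaxed_apply_lt (φ := dotProductBilin ℝ ℝ c) hXv
          (C := fun i => {x | g i x ≤ 0}) (fun i => by simpa using (hgc i).convex_le 0)
          hxX (fun i => hxg i (Finset.mem_univ i))
          (fun y hy hyg => (hxmin y hy fun i _ => hyg i).1)
          (fun i _ => (hopt _).1)
          (fun i _ j hj => (hopt _).2.1 j (Finset.mem_erase.2 ⟨hj, Finset.mem_univ j⟩))
          (fun i hi => hsupport_lt i (Finset.mem_filter.1 hi).2)
    _ = n := Module.finrank_fin_fun ℝ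

open Classical in
/-- The number of support constraints of a convex program over a compact convex set
`X ⊂ ℝⁿ` with linear objective `cᵀx` and finitely many convex lower-semicontinuous
constraints `g i x ≤ 0`, each of whose subproblems has a unique minimizer `xstar s`,
is at most `n`: at most `n` indices `i` satisfy `x*(I∖{i}) ≠ x*(I)`. -/
theorem support_constraints_card_le {n : ℕ} {ι : Type*} [Fintype ι] [DecidableEq ι]
    (X : Set (Fin n → ℝ)) (hXc : IsCompact X) (hXv : Convex ℝ X)
    (c : Fin n → ℝ) (g : ι → (Fin n → ℝ) → ℝ)
    (hgc : ∀ i : ι, ConvexOn ℝ Set.univ (g i))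
    (hgl : ∀ i : ι, LowerSemicontinuous (g i))
    (xstar : Finset ι → (Fin n → ℝ))
    -- `xstar s` is the unique minimizer of `cᵀx` over `{x ∈ X : g i x ≤ 0 ∀ i ∈ s}`
    (hopt : ∀ s : Finset ι,
      xstar s ∈ X ∧ (∀ i ∈ s, g i (xstar s) ≤ 0) ∧
      ∀ y ∈ X, (∀ i ∈ s, g i y ≤ 0) →
        objective c (xstar s) ≤ objective c y ∧
        (objective c y = objective c (xstar s) → y = xstar s)) :
    (Finset.univ.filter
        fun i : ι => xstar (Finset.univ.erase i) ≠ xstar Finset.univ).card ≤ n :=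
  support_constraints_card_le_general X hXv c g hgc xstar hopt
end
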